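/- For n ∈ {2, 3}, the size multipartite Ramsey number m_3(nK_2, C_7) equals 3. That is, every 2-coloring of the edges of K_{3×3} contains a matching nK_2 in the first color or a cycle C_7 in the second color, and there is a 2-coloring of the edges of K_{3×2} containing neither. -/

import Mathlib

open SimpleGraph

/-- The complete multipartite graph `K_{j x t}` with `j` parts, each of size `t`. -/
def multiK (j t : ℕ) : SimpleGraph (Fin j × Fin t) where
  Adj a b := a.1 ≠ b.1
  symm := ⟨fun _ _ h => Ne.symm h⟩
  loopless := ⟨fun _ h => h rfl⟩

/-- `G` contains a copy of `H`. -/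
def Contains {α β : Type*} (G : SimpleGraph α) (H : SimpleGraph β) : Prop :=
  ∃ f : β → α, Function.Injective f ∧ ∀ ⦃a b⦄, H.Adj a b → G.Adj (f a) (f b)

/-- The monochromatic subgraph of `G` in color `i` under the edge-coloring `c`. -/
def colorClass {α : Type*} {k : ℕ} (G : SimpleGraph α) (c : Sym2 α → Fin k) (i : Fin k) :
    SimpleGraph α where
  Adj a b := G.Adj a b ∧ c s(a, b) = i
  symm := ⟨fun _ _ h => ⟨h.1.symm, by rw [Sym2.eq_swap]; exact h.2⟩⟩
  loopless := ⟨fun _ h => G.irrefl h.1⟩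

/-- The stripe `nK₂`: the graph consisting of `n` pairwise disjoint edges. -/
def stripe (n : ℕ) : SimpleGraph (Fin n × Fin 2) where
  Adj a b := a.1 = b.1 ∧ a.2 ≠ b.2
  symm := ⟨fun _ _ h => ⟨h.1.symm, h.2.symm⟩⟩
  loopless := ⟨fun _ h => h.2 rfl⟩

/-- Every 3-coloring of the edges of `K_{j x t}` yields a copy of `K_{1,2}` in color 0,
or of `P₄` in color 1, or of `nK₂` in color 2. -/
def Arrows3 (j t n : ℕ) : Prop :=
  ∀ c : Sym2 (Fin j × Fin t) → Fin 3,
    Contains (colorClass (multiK j t) c 0) (pathGraph 3) ∨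
    Contains (colorClass (multiK j t) c 1) (pathGraph 4) ∨
    Contains (colorClass (multiK j t) c 2) (stripe n)

/-- Every 2-coloring of the edges of `K_{j x t}` yields a copy of `nK₂` in color 0
or of `C₇` in color 1. -/
def ArrowsC7 (j t n : ℕ) : Prop :=
  ∀ c : Sym2 (Fin j × Fin t) → Fin 2,
    Contains (colorClass (multiK j t) c 0) (stripe n) ∨
    Contains (colorClass (multiK j t) c 1) (cycleGraph 7)

/-!
Colour `0` is red and colour `1` is blue. Colouring every edge of `K_{3×t}` blue shows `t ≥ 3`:
there is no red edge, and for `t ≤ 2` there are fewer than seven vertices.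

On `K_{3×3}` it suffices to treat `n = 3`, as `2K₂ ⊆ 3K₂`; suppose there is no red `3K₂`. If no
two red edges are disjoint, every red edge meets the ends `u, v` of one of them, and the blue graph
contains `K_{3×3} - {u, v}`, which has a `7`-cycle. Otherwise let `w₁s₁, w₂s₂` be disjoint red
edges. The five other vertices span no red edge, and one end `wᵢ` of each of the two edges has at
most one red neighbour `zᵢ` among them, since otherwise the matching augments to a red `3K₂`. So
the blue graph contains `K_{3×3} - {s₁, s₂}` minus the edges `w₁z₁, w₂z₂, w₁w₂`. That this graph
has a `7`-cycle is a finite depth-first search, checked by `decide` once an automorphism of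
`K_{3×3}` has moved `w₁, s₁, w₂` to one of three normal positions.
-/

theorem contains_iff_isContained {α β : Type*} {G : SimpleGraph α} {H : SimpleGraph β} :
    Contains G H ↔ H ⊑ G :=
  ⟨fun ⟨f, hf, hadj⟩ => ⟨⟨⟨f, fun h => hadj h⟩, hf⟩⟩,
    fun ⟨e⟩ => ⟨e, e.injective, fun _ _ h => e.toHom.map_adj h⟩⟩

theorem not_contains_of_card_lt {α β : Type*} [Fintype α] [Fintype β] {G : SimpleGraph α}
    {H : SimpleGraph β} (h : Fintype.card α < Fintype.card β) : ¬Contains G H :=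
  fun ⟨f, hf, _⟩ => (Fintype.card_le_of_injective f hf).not_gt h

theorem not_contains_colorClass_const {α β : Type*} {G : SimpleGraph α} {H : SimpleGraph β}
    {k : ℕ} {i j : Fin k} (hij : i ≠ j) {a b : β} (hab : H.Adj a b) :
    ¬Contains (colorClass G (fun _ => i) j) H :=
  fun ⟨_, _, hadj⟩ => hij (hadj hab).2

theorem colorClass_one_adj_iff {α : Type*} {G : SimpleGraph α} {c : Sym2 α → Fin 2} {x y : α} :
    (colorClass G c 1).Adj x y ↔ G.Adj x y ∧ ¬(colorClass G c 0).Adj x y := by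
  show G.Adj x y ∧ c s(x, y) = 1 ↔ G.Adj x y ∧ ¬(G.Adj x y ∧ c s(x, y) = 0)
  generalize c s(x, y) = i
  fin_cases i <;> simp

namespace SimpleGraph

variable {α β : Type*} {G : SimpleGraph α}

theorem stripe_isContained_stripe {m n : ℕ} (h : m ≤ n) : stripe m ⊑ stripe n :=
  ⟨⟨⟨Prod.map (Fin.castLE h) id, fun {a b} hab =>
    show Fin.castLE h a.1 = Fin.castLE h b.1 ∧ a.2 ≠ b.2 from ⟨by rw [hab.1], hab.2⟩⟩,
    (Fin.castLE_injective h).prodMap Function.injective_id⟩⟩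

theorem stripe_three_isContained {a b c d e f : α} (hab : G.Adj a b) (hcd : G.Adj c d)
    (hef : G.Adj e f) (hl : [a, b, c, d, e, f].Nodup) : stripe 3 ⊑ G := by
  refine ⟨⟨⟨fun p => [a, b, c, d, e, f].get (finProdFinEquiv p), ?_⟩,
    (List.nodup_iff_injective_get.mp hl).comp finProdFinEquiv.injective⟩⟩
  rintro ⟨i, x⟩ ⟨j, y⟩ ⟨rfl : i = j, hxy⟩
  fin_cases i <;> fin_cases x <;> fin_cases y <;>
    first
    | exact absurd rfl hxy
    | exact hab | exact hab.symm | exact hcd | exact hcd.symm | exact hef | exact hef.symm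

theorem cycleGraph_isContained_of_isChain {l : List α} {v : α} (hlast : l.getLast? = some v)
    (hl : l.Nodup) (hc : (v :: l).IsChain G.Adj) : cycleGraph l.length ⊑ G := by
  refine ⟨⟨⟨l.get, fun {x y} hxy => ?_⟩, List.nodup_iff_injective_get.mp hl⟩⟩
  suffices key : ∀ x y : Fin l.length, (y - x).val = 1 → G.Adj (l.get x) (l.get y) from
    (cycleGraph_adj'.mp hxy).elim (fun h => (key _ _ h).symm) (key _ _)
  intro x y h
  have hy : y.val = x.val + 1 ∨ x.val + 1 = l.length ∧ y.val = 0 := by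
    rcases le_or_gt x y with hle | hlt
    · rw [Fin.sub_val_of_le hle] at h; omega
    · rw [Fin.coe_sub_iff_lt.mpr hlt] at h; omega
  have hstep := List.isChain_iff_getElem.mp hc
  rcases hy with hy | ⟨hx, hy⟩
  · have hxy := hstep (x.val + 1) (by simp; omega)
    simp only [List.getElem_cons_succ] at hxy
    simpa [hy] using hxy
  · have hxv : l[x.val] = v := by
      obtain ⟨_, hv⟩ := List.getElem?_eq_some_iff.mp (List.getLast?_eq_getElem? ▸ hlast)
      simpa [show x.val = l.length - 1 by omega] using hv
    simpa [hxv, hy] using hstep 0 (by simp; omega)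

def deleteVertsEdges (G : SimpleGraph α) (S : List α) (F : List (Sym2 α)) : SimpleGraph α where
  Adj x y := G.Adj x y ∧ x ∉ S ∧ y ∉ S ∧ s(x, y) ∉ F
  symm := ⟨fun x y h => ⟨h.1.symm, h.2.2.1, h.2.1, by rw [Sym2.eq_swap]; exact h.2.2.2⟩⟩
  loopless := ⟨fun _ h => G.irrefl h.1⟩

instance [DecidableEq α] [DecidableRel G.Adj] (S : List α) (F : List (Sym2 α)) :
    DecidableRel (G.deleteVertsEdges S F).Adj :=
  fun x y => inferInstanceAs (Decidable (G.Adj x y ∧ x ∉ S ∧ y ∉ S ∧ s(x, y) ∉ F))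

def Iso.deleteVertsEdges {G' : SimpleGraph β} (e : G ≃g G') (S : List α) (F : List (Sym2 α)) :
    G.deleteVertsEdges S F ≃g G'.deleteVertsEdges (S.map e) (F.map (Sym2.map e)) where
  toEquiv := e.toEquiv
  map_rel_iff' {x y} := by
    have hS : ∀ z, e z ∈ S.map e ↔ z ∈ S := fun _ => List.mem_map_of_injective e.injective
    have hF : s(e x, e y) ∈ F.map (Sym2.map e) ↔ s(x, y) ∈ F := by
      rw [← Sym2.map_mk]
      exact List.mem_map_of_injective (Sym2.map.injective e.injective)
    exact and_congr e.map_adj_iff <| and_congr (not_congr (hS x)) <|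
      and_congr (not_congr (hS y)) (not_congr hF)

/-- Depth-first search for a cycle of `G` through `v₀`: the path `v :: p`, listed from its end `v`
back to `v₀`, extends by `k` further vertices taken from `L` to a cycle. -/
def ExtendsToCycle (G : SimpleGraph α) (L : List α) (v₀ v : α) (p : List α) : ℕ → Prop
  | 0 => G.Adj v v₀
  | k + 1 => ∃ w ∈ L, w ∉ v :: p ∧ G.Adj v w ∧ G.ExtendsToCycle L v₀ w (v :: p) k

instance decidableExtendsToCycle [DecidableEq α] [DecidableRel G.Adj] (L : List α) (v₀ : α) :
    ∀ v p k, Decidable (G.ExtendsToCycle L v₀ v p k)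
  | v, _, 0 => inferInstanceAs (Decidable (G.Adj v v₀))
  | v, p, k + 1 =>
    have := fun w => decidableExtendsToCycle L v₀ w (v :: p) k
    inferInstanceAs
      (Decidable (∃ w ∈ L, w ∉ v :: p ∧ G.Adj v w ∧ G.ExtendsToCycle L v₀ w (v :: p) k))

theorem ExtendsToCycle.exists_cycle_list {L : List α} {v₀ : α} :
    ∀ {k v p}, G.ExtendsToCycle L v₀ v p k → (v :: p).Nodup → (v :: p).IsChain G.Adj →
      (v :: p).getLast? = some v₀ → ∃ l : List α, l.length = p.length + 1 + k ∧ l.Nodup ∧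
        (v₀ :: l).IsChain G.Adj ∧ l.getLast? = some v₀
  | 0, v, p, h, hnd, hc, hlast => ⟨v :: p, rfl, hnd, List.isChain_cons_cons.mpr ⟨h.symm, hc⟩, hlast⟩
  | k + 1, v, p, ⟨w, _, hw, hvw, h⟩, hnd, hc, hlast => by
    obtain ⟨l, hlen, hl⟩ := h.exists_cycle_list (List.nodup_cons.mpr ⟨hw, hnd⟩)
      (List.isChain_cons_cons.mpr ⟨hvw.symm, hc⟩) (by rwa [List.getLast?_cons_cons])
    exact ⟨l, by simp only [hlen, List.length_cons]; omega, hl⟩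

theorem ExtendsToCycle.cycleGraph_isContained {L : List α} {v₀ : α} {k : ℕ}
    (h : G.ExtendsToCycle L v₀ v₀ [] k) : cycleGraph (k + 1) ⊑ G := by
  obtain ⟨l, hlen, hl, hc, hlast⟩ :=
    h.exists_cycle_list (List.nodup_singleton v₀) (List.isChain_singleton v₀) rfl
  rw [show k + 1 = l.length by simp only [hlen, List.length_nil]; omega]
  exact cycleGraph_isContained_of_isChain hlast hl hc

end SimpleGraph

theorem ArrowsC7.mono {j t m n : ℕ} (h : ArrowsC7 j t n) (hmn : m ≤ n) : ArrowsC7 j t m := by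
  intro c
  refine (h c).imp_left fun hn => ?_
  rw [contains_iff_isContained] at hn ⊢
  exact (stripe_isContained_stripe hmn).trans hn

instance (j t : ℕ) : DecidableRel (multiK j t).Adj :=
  fun a b => inferInstanceAs (Decidable (a.1 ≠ b.1))

local notation "V" => Fin 3 × Fin 3

namespace multiK

def partIso {j t : ℕ} (σ : Equiv.Perm (Fin j)) (τ : Fin j → Equiv.Perm (Fin t)) :
    multiK j t ≃g multiK j t :=
  ⟨Equiv.prodShear σ τ, σ.injective.ne_iff⟩

theorem partIso_apply {j t : ℕ} (σ : Equiv.Perm (Fin j)) (τ : Fin j → Equiv.Perm (Fin t))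
    (x : Fin j × Fin t) : partIso σ τ x = (σ x.1, τ x.1 x.2) := rfl

theorem exists_iso_normalize_edge {w s : V} (h : w.1 ≠ s.1) :
    ∃ φ : multiK 3 3 ≃g multiK 3 3, φ w = (0, 0) ∧ φ s = (1, 0) := by
  obtain ⟨σ, hw, hs⟩ : ∃ σ : Equiv.Perm (Fin 3), σ w.1 = 0 ∧ σ s.1 = 1 := by
    revert h; generalize w.1 = a; generalize s.1 = b; revert a b; decide
  refine ⟨partIso σ fun p => Equiv.swap 0 (if p = w.1 then w.2 else s.2), ?_, ?_⟩ <;>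
    simp [partIso_apply, hw, hs, h.symm]

theorem exists_iso_normalize_edge_vertex {w s x : V} (h : w.1 ≠ s.1) (hx : x ∉ [w, s]) :
    ∃ φ : multiK 3 3 ≃g multiK 3 3,
      φ w = (0, 0) ∧ φ s = (1, 0) ∧ φ x ∈ [(0, 1), (1, 1), (2, 0)] := by
  obtain ⟨φ, hw, hs⟩ := exists_iso_normalize_edge h
  have hy : φ x ∉ [(0, 0), (1, 0)] := by
    rw [← hw, ← hs]
    simpa using hx
  have hψ : ∀ y : V, y ∉ [(0, 0), (1, 0)] →
      let ψ := partIso 1 fun p => if p = y.1 then Equiv.swap y.2 (if p = 2 then 0 else 1) else 1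
      ψ (0, 0) = (0, 0) ∧ ψ (1, 0) = (1, 0) ∧ ψ y ∈ [(0, 1), (1, 1), (2, 0)] := by
    decide
  obtain ⟨h₀, h₁, hmem⟩ := hψ (φ x) hy
  exact ⟨φ.trans _, by rw [RelIso.trans_apply, hw, h₀], by rw [RelIso.trans_apply, hs, h₁],
    by rwa [RelIso.trans_apply]⟩

end multiK

theorem cycleGraph_isContained_deleteVertsEdges_pair {u v : V} (h : u.1 ≠ v.1) :
    cycleGraph 7 ⊑ (multiK 3 3).deleteVertsEdges [u, v] [] := by
  obtain ⟨φ, hu, hv⟩ := multiK.exists_iso_normalize_edge h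
  have hsearch : ((multiK 3 3).deleteVertsEdges [(0, 0), (1, 0)] []).ExtendsToCycle
      (List.finRange 3 ×ˢ List.finRange 3) (2, 0) (2, 0) [] 6 := by
    decide
  have hφ := (φ.deleteVertsEdges [u, v] []).isContained'
  simp only [List.map_cons, List.map_nil, hu, hv] at hφ
  exact hsearch.cycleGraph_isContained.trans hφ

theorem extendsToCycle_deleteVertsEdges_normal :
    ∀ w₂ ∈ [((0 : Fin 3), (1 : Fin 3)), (1, 1), (2, 0)], ∀ s₂ z₁ z₂ : V,
      w₂.1 ≠ s₂.1 → s₂ ∉ [(0, 0), (1, 0)] → z₁ ∉ [(0, 0), (1, 0)] → z₂ ∉ [w₂, s₂] →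
        ((multiK 3 3).deleteVertsEdges [(1, 0), s₂]
          [s((0, 0), z₁), s(w₂, z₂), s((0, 0), w₂)]).ExtendsToCycle
            (List.finRange 3 ×ˢ List.finRange 3) (0, 0) (0, 0) [] 6 := by
  decide +kernel

theorem cycleGraph_isContained_deleteVertsEdges {w₁ s₁ w₂ s₂ z₁ z₂ : V} (h₁ : w₁.1 ≠ s₁.1)
    (h₂ : w₂.1 ≠ s₂.1) (hw₂ : w₂ ∉ [w₁, s₁]) (hs₂ : s₂ ∉ [w₁, s₁]) (hz₁ : z₁ ∉ [w₁, s₁])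
    (hz₂ : z₂ ∉ [w₂, s₂]) :
    cycleGraph 7 ⊑ (multiK 3 3).deleteVertsEdges [s₁, s₂] [s(w₁, z₁), s(w₂, z₂), s(w₁, w₂)] := by
  obtain ⟨φ, hw₁, hs₁, hmem⟩ := multiK.exists_iso_normalize_edge_vertex h₁ hw₂
  have hφ := (φ.deleteVertsEdges [s₁, s₂] [s(w₁, z₁), s(w₂, z₂), s(w₁, w₂)]).isContained'
  simp only [List.map_cons, List.map_nil, Sym2.map_mk, hw₁, hs₁] at hφ
  have hsearch := extendsToCycle_deleteVertsEdges_normal (φ w₂) hmem (φ s₂) (φ z₁) (φ z₂)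
    (φ.map_adj_iff.mpr h₂) (by rw [← hw₁, ← hs₁]; simpa using hs₂)
    (by rw [← hw₁, ← hs₁]; simpa using hz₁) (by simpa using hz₂)
  exact hsearch.cycleGraph_isContained.trans hφ

section Coloring

variable {c : Sym2 V → Fin 2}

theorem isContained_colorClass_one_of_red_covered {u v : V} (huv : u.1 ≠ v.1)
    (hred : ∀ x y, x ∉ [u, v] → y ∉ [u, v] → ¬(colorClass (multiK 3 3) c 0).Adj x y) :
    cycleGraph 7 ⊑ colorClass (multiK 3 3) c 1 :=
  (cycleGraph_isContained_deleteVertsEdges_pair huv).mono_right fun x y h =>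
    colorClass_one_adj_iff.mpr ⟨h.1, hred x y h.2.1 h.2.2.1⟩

theorem isContained_colorClass_one_of_not_two_red
    (h2 : ¬∃ a b a' b', (colorClass (multiK 3 3) c 0).Adj a b ∧
      (colorClass (multiK 3 3) c 0).Adj a' b' ∧ [a, b, a', b'].Nodup) :
    cycleGraph 7 ⊑ colorClass (multiK 3 3) c 1 := by
  by_cases h1 : ∃ u v, (colorClass (multiK 3 3) c 0).Adj u v
  · obtain ⟨u, v, huv⟩ := h1
    refine isContained_colorClass_one_of_red_covered huv.1 fun x y hx hy hxy => h2 ?_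
    have := huv.ne
    have := hxy.ne
    exact ⟨u, v, x, y, huv, hxy, by grind [List.nodup_cons]⟩
  · simp only [not_exists] at h1
    exact isContained_colorClass_one_of_red_covered (u := (0, 0)) (v := (1, 0)) (by decide)
      fun x y _ _ => h1 x y

theorem deleteVertsEdges_le_colorClass_one {w₁ s₁ w₂ s₂ z₁ z₂ : V}
    (hU : ∀ x y, x ∉ [w₁, s₁, w₂, s₂] → y ∉ [w₁, s₁, w₂, s₂] →
      ¬(colorClass (multiK 3 3) c 0).Adj x y)
    (hz₁ : ∀ y ∉ [w₁, s₁, w₂, s₂], (colorClass (multiK 3 3) c 0).Adj w₁ y → y = z₁)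
    (hz₂ : ∀ y ∉ [w₁, s₁, w₂, s₂], (colorClass (multiK 3 3) c 0).Adj w₂ y → y = z₂) :
    (multiK 3 3).deleteVertsEdges [s₁, s₂] [s(w₁, z₁), s(w₂, z₂), s(w₁, w₂)] ≤
      colorClass (multiK 3 3) c 1 := by
  intro x y ⟨hxy, hx, hy, hF⟩
  refine colorClass_one_adj_iff.mpr ⟨hxy, fun hred => hF ?_⟩
  have hout : ∀ x y, x ∉ [s₁, s₂] → y ∉ [w₁, s₁, w₂, s₂] →
      (colorClass (multiK 3 3) c 0).Adj x y → s(x, y) ∈ [s(w₁, z₁), s(w₂, z₂), s(w₁, w₂)] := by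
    intro x y hx hy hred
    by_cases h₁ : x = w₁
    · simp [h₁, hz₁ y hy (h₁ ▸ hred)]
    by_cases h₂ : x = w₂
    · simp [h₂, hz₂ y hy (h₂ ▸ hred)]
    exact absurd hred (hU x y (by grind) hy)
  by_cases hyU : y ∈ [w₁, s₁, w₂, s₂]
  · by_cases hxU : x ∈ [w₁, s₁, w₂, s₂]
    · have hw : ∀ v, v ∉ [s₁, s₂] → v ∈ [w₁, s₁, w₂, s₂] → v = w₁ ∨ v = w₂ := by grind
      rcases hw x hx hxU with rfl | rfl <;> rcases hw y hy hyU with rfl | rfl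
      · exact absurd rfl hred.ne
      · simp
      · simp [Sym2.eq_swap]
      · exact absurd rfl hred.ne
    · exact Sym2.eq_swap (a := x) ▸ hout y x hy hxU hred.symm
  · exact hout x y hx hyU hred

theorem exists_end_with_unique_outer_red_neighbor
    (h3 : ¬stripe 3 ⊑ colorClass (multiK 3 3) c 0) {a b a' b' : V}
    (hab : (colorClass (multiK 3 3) c 0).Adj a b) (hab' : (colorClass (multiK 3 3) c 0).Adj a' b')
    (hnd : [a, b, a', b'].Nodup) :
    ∃ w s z, (colorClass (multiK 3 3) c 0).Adj w s ∧ [w, s].Perm [a, b] ∧ z ∉ [a, b] ∧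
      ∀ y ∉ [a, b, a', b'], (colorClass (multiK 3 3) c 0).Adj w y → y = z := by
  by_cases ha : ∃ x ∉ [a, b, a', b'], (colorClass (multiK 3 3) c 0).Adj a x
  · obtain ⟨x, hx, hax⟩ := ha
    refine ⟨b, a, x, hab.symm, List.Perm.swap a b [], fun h => hx (List.mem_append_left _ h),
      fun y hy hby => ?_⟩
    by_contra hxy
    exact h3 (stripe_three_isContained hax hby hab' (by grind [List.nodup_cons]))
  · simp only [not_exists, not_and] at ha
    exact ⟨a, b, a', hab, List.Perm.refl _, by grind [List.nodup_cons],
      fun y hy hay => absurd hay (ha y hy)⟩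

theorem isContained_colorClass_one_of_two_red (h3 : ¬stripe 3 ⊑ colorClass (multiK 3 3) c 0)
    {a b a' b' : V} (hab : (colorClass (multiK 3 3) c 0).Adj a b)
    (hab' : (colorClass (multiK 3 3) c 0).Adj a' b') (hnd : [a, b, a', b'].Nodup) :
    cycleGraph 7 ⊑ colorClass (multiK 3 3) c 1 := by
  have hU : ∀ x y, x ∉ [a, b, a', b'] → y ∉ [a, b, a', b'] →
      ¬(colorClass (multiK 3 3) c 0).Adj x y := fun x y hx hy hxy =>
    h3 (stripe_three_isContained hxy hab hab' (List.nodup_cons.mpr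
      ⟨by simp_all [hxy.ne], List.nodup_cons.mpr ⟨hy, hnd⟩⟩))
  have hswap : [a', b', a, b].Perm [a, b, a', b'] :=
    List.perm_append_comm (l₁ := [a', b']) (l₂ := [a, b])
  obtain ⟨w₁, s₁, z₁, hws₁, hp₁, hz₁, hr₁⟩ :=
    exists_end_with_unique_outer_red_neighbor h3 hab hab' hnd
  obtain ⟨w₂, s₂, z₂, hws₂, hp₂, hz₂, hr₂⟩ :=
    exists_end_with_unique_outer_red_neighbor h3 hab' hab (hswap.nodup_iff.mpr hnd)
  have hp : [w₁, s₁, w₂, s₂].Perm [a, b, a', b'] := hp₁.append hp₂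
  have hdisj := List.disjoint_of_nodup_append (l₁ := [w₁, s₁]) (hp.nodup_iff.mpr hnd)
  refine (cycleGraph_isContained_deleteVertsEdges hws₁.1 hws₂.1 (fun h => hdisj h (by simp))
    (fun h => hdisj h (by simp)) (by rwa [hp₁.mem_iff]) (by rwa [hp₂.mem_iff])).mono_right
    (deleteVertsEdges_le_colorClass_one (by simpa only [hp.mem_iff] using hU)
      (by simpa only [hp.mem_iff] using hr₁)
      (by simpa only [hp.mem_iff, ← hswap.mem_iff] using hr₂))

theorem arrowsC7_three_three_three : ArrowsC7 3 3 3 := by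
  intro c
  rw [contains_iff_isContained, contains_iff_isContained, or_iff_not_imp_left]
  intro h3
  by_cases h2 : ∃ a b a' b', (colorClass (multiK 3 3) c 0).Adj a b ∧
      (colorClass (multiK 3 3) c 0).Adj a' b' ∧ [a, b, a', b'].Nodup
  · obtain ⟨a, b, a', b', hab, hab', hnd⟩ := h2
    exact isContained_colorClass_one_of_two_red h3 hab hab' hnd
  · exact isContained_colorClass_one_of_not_two_red h2

end Coloring

theorem stmt10 (n : ℕ) (hn : n = 2 ∨ n = 3) :
    IsLeast {t : ℕ | 0 < t ∧ ArrowsC7 3 t n} 3 ∧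
    (∃ c : Sym2 (Fin 3 × Fin 2) → Fin 2,
      ¬ Contains (colorClass (multiK 3 2) c 0) (stripe n) ∧
      ¬ Contains (colorClass (multiK 3 2) c 1) (cycleGraph 7)) := by
  have hn₀ : 0 < n := by omega
  have hstripe : (stripe n).Adj (⟨0, hn₀⟩, 0) (⟨0, hn₀⟩, 1) := ⟨rfl, Fin.zero_ne_one⟩
  have hblue : ∀ t, 3 * t < 7 →
      ¬Contains (colorClass (multiK 3 t) (fun _ => (1 : Fin 2)) 0) (stripe n) ∧
      ¬Contains (colorClass (multiK 3 t) (fun _ => (1 : Fin 2)) 1) (cycleGraph 7) := fun t ht =>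
    ⟨not_contains_colorClass_const Fin.zero_ne_one.symm hstripe,
      not_contains_of_card_lt (by simpa using ht)⟩
  refine ⟨⟨⟨by norm_num, arrowsC7_three_three_three.mono (by omega)⟩, fun t ⟨_, hA⟩ => ?_⟩,
    ⟨_, hblue 2 (by norm_num)⟩⟩
  by_contra! hlt
  exact (hA _).elim (hblue t (by omega)).1 (hblue t (by omega)).2
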